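/- For any simplicial object A in a semi-abelian category, H₀A is the coequalizer of ∂₀, ∂₁ : A₁ ⇉ A₀. -/

import Mathlib

/-!
`H₀A` is the cokernel of `∂₁` restricted to `K[∂₀]`, and the pair `∂₀, ∂₁` is reflexive with
common section `σ₀`. In a semi-abelian category the kernel of a split epimorphism and its section
are jointly epimorphic: the equalizer of two maps agreeing on both contains them, so the Short Five
Lemma makes it an isomorphism. Hence a map out of `A₀` kills `∂₁` on `K[∂₀]` exactly when it
coequalizes `∂₀` and `∂₁`.
-/

universe w v u
noncomputable section
open CategoryTheory CategoryTheory.Limits CategoryTheory.Subobject Opposite Simplicial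

namespace SemiAbPaper
section Base


variable {C : Type u} [Category.{v} C]

/-- A regular epimorphism (propositional form). -/
def IsRegEpi {X Y : C} (f : X ⟶ Y) : Prop := Nonempty (RegularEpi f)

/-- A regular projective object. -/
def RegularProjective (P : C) : Prop :=
  ∀ {X Y : C} (e : X ⟶ Y), IsRegEpi e → ∀ g : P ⟶ Y, ∃ h : P ⟶ X, h ≫ e = g

/-- `C` has enough regular projectives. -/
def EnoughRegularProjectives (C : Type u) [Category.{v} C] : Prop :=
  ∀ X : C, ∃ (P : C) (p : P ⟶ X), RegularProjective P ∧ IsRegEpi p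

/-- A regular category: finitely complete, coequalizers of kernel pairs,
regular epimorphisms stable under pullback. -/
class IsRegularCategory (C : Type u) [Category.{v} C] [HasFiniteLimits C] : Prop where
  hasCoequalizersOfKernelPairs :
    ∀ {X Y : C} (f : X ⟶ Y), HasColimit (parallelPair (pullback.fst f f) (pullback.snd f f))
  regularEpiPullbackStable :
    ∀ {X Y Z : C} (f : X ⟶ Y) (g : Z ⟶ Y), IsRegEpi f → IsRegEpi (pullback.snd f g)

/-- A semi-abelian category (relative to ambient pointedness and finite completeness):
Barr-exact, Bourn-protomodular, with binary coproducts and a zero object. -/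
class IsSemiAbelian (C : Type u) [Category.{v} C] [HasZeroMorphisms C] [HasFiniteLimits C] :
    Prop where
  hasZeroObject : HasZeroObject C
  hasBinaryCoproducts : HasBinaryCoproducts C
  hasCoequalizersOfKernelPairs :
    ∀ {X Y : C} (f : X ⟶ Y), HasColimit (parallelPair (pullback.fst f f) (pullback.snd f f))
  regularEpiPullbackStable :
    ∀ {X Y Z : C} (f : X ⟶ Y) (g : Z ⟶ Y), IsRegEpi f → IsRegEpi (pullback.snd f g)
  /-- Barr-exactness: every internal equivalence relation is a kernel pair. -/
  exactEquivalenceRelations :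
    ∀ {R X : C} (r₀ r₁ : R ⟶ X),
      (∀ {T : C} (a b : T ⟶ R), a ≫ r₀ = b ≫ r₀ → a ≫ r₁ = b ≫ r₁ → a = b) →
      (∀ T : C, _root_.Equivalence fun x y : T ⟶ X => ∃ t : T ⟶ R, t ≫ r₀ = x ∧ t ≫ r₁ = y) →
      ∃ (Y : C) (f : X ⟶ Y), IsKernelPair f r₀ r₁
  /-- Bourn-protomodularity: the Short Five Lemma. -/
  protomodular :
    ∀ {E' B' E B : C} (p' : E' ⟶ B') (p : E ⟶ B), IsRegEpi p' → IsRegEpi p →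
      ∀ (v : E' ⟶ E) (w : B' ⟶ B), p' ≫ w = v ≫ p →
      ∀ u : kernel p' ⟶ kernel p, u ≫ kernel.ι p = kernel.ι p' ≫ v →
      IsIso u → IsIso w → IsIso v


end Base

section MoorePart

variable {C : Type u} [Category.{v} C] [HasZeroMorphisms C] [HasFiniteLimits C]

namespace Moore

variable (X : SimplicialObject C)

/-- The `n`-th object of the Moore complex of `X`:
the intersection of the kernels of `∂ᵢ : Xₙ ⟶ X_{n-1}` for `0 ≤ i ≤ n-1`. -/
def NSub : ∀ n : ℕ, Subobject (X _⦋n⦌) := fun n => match n with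
  | 0 => ⊤
  | n + 1 => Finset.univ.inf fun k : Fin (n + 1) => kernelSubobject (X.δ k.castSucc)

/-- The `n`-th object of the Moore complex, as an object of `C`. -/
def NObj (n : ℕ) : C := (NSub X n : C)

theorem arrow_comp_δ_castSucc (n : ℕ) (i : Fin (n + 1)) :
    (NSub X (n + 1)).arrow ≫ X.δ i.castSucc = 0 := by
  show (Finset.univ.inf fun k : Fin (n + 1) =>
      kernelSubobject (X.δ k.castSucc)).arrow ≫ X.δ i.castSucc = 0
  rw [← factorThru_arrow _ _ (finset_inf_arrow_factors Finset.univ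
      (fun k : Fin (n + 1) => kernelSubobject (X.δ k.castSucc)) i (Finset.mem_univ _)),
    Category.assoc, kernelSubobject_arrow_comp, comp_zero]

/-- The differential `dₙ₊₁ : Nₙ₊₁X ⟶ NₙX` of the Moore complex, induced by the
last face `∂ₙ₊₁`. -/
def MooreD : ∀ n : ℕ, NObj X (n + 1) ⟶ NObj X n := fun n => match n with
  | 0 => (NSub X 1).arrow ≫ X.δ (Fin.last 1) ≫ (inv (⊤ : Subobject (X _⦋0⦌)).arrow : X _⦋0⦌ ⟶ (⊤ : Subobject (X _⦋0⦌)))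
  | n + 1 =>
    (factorThru _ ((NSub X (n + 2)).arrow ≫ X.δ (Fin.last (n + 2))) (by
      refine (finset_inf_factors _).mpr fun i _ => ?_
      apply kernelSubobject_factors
      show ((NSub X (n + 2)).arrow ≫ X.δ (Fin.last (n + 2))) ≫ X.δ i.castSucc = 0
      rw [Category.assoc,
        show X.δ (Fin.last (n + 2)) = X.δ ((Fin.last (n + 1)).succ) from by rw [Fin.succ_last],
        X.δ_comp_δ (Fin.le_last i.castSucc), ← Category.assoc,
        arrow_comp_δ_castSucc, zero_comp]) : (NSub X (n + 2) : C) ⟶ (NSub X (n + 1) : C))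

theorem d_squared (n : ℕ) : MooreD X (n + 1) ≫ MooreD X n = 0 := by
  rcases n with _ | n <;> dsimp only [MooreD, NObj]
  · erw [factorThru_arrow_assoc,
      show X.δ (Fin.last 2) = X.δ ((Fin.last 1).succ) from by erw [Fin.succ_last],
      Category.assoc, X.δ_comp_δ_assoc (le_refl (Fin.last 1)), ← Category.assoc,
      arrow_comp_δ_castSucc, zero_comp]
    rfl
  · apply (cancel_mono (NSub X (n + 1)).arrow).1
    erw [Category.assoc, factorThru_arrow, factorThru_arrow_assoc,
      show X.δ (Fin.last (n + 3)) = X.δ ((Fin.last (n + 2)).succ) from by erw [Fin.succ_last],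
      Category.assoc, X.δ_comp_δ (le_refl (Fin.last (n + 2))), ← Category.assoc,
      arrow_comp_δ_castSucc, zero_comp, zero_comp]

variable [HasCokernels C]

/-- The homology `HₙX` of the Moore complex of `X`:
the cokernel of the factorization of `dₙ₊₁` through the kernel of `dₙ`. -/
def H : ℕ → C := fun n => match n with
  | 0 => cokernel (MooreD X 0)
  | n + 1 => cokernel (kernel.lift (MooreD X n) (MooreD X (n + 1)) (d_squared X n))

/-- The object of `n`-cycles `ZₙX = ⋂_{i ∈ [n]} K[∂ᵢ]`
(realized as `X₀` for `n = 0` and as the kernel of `dₙ` for `n ≥ 1`). -/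
def Z : ℕ → C := fun n => match n with
  | 0 => X _⦋0⦌
  | n + 1 => kernel (MooreD X n)

/-- The monomorphism `ZₙX ⟶ Xₙ`. -/
def zArrow : ∀ n : ℕ, Z X n ⟶ X _⦋n⦌ := fun n => match n with
  | 0 => 𝟙 _
  | n + 1 => kernel.ι (MooreD X n) ≫ (NSub X (n + 1)).arrow

/-- The canonical quotient map `qₙ : ZₙX ⟶ HₙX`. -/
def q : ∀ n : ℕ, Z X n ⟶ H X n := fun n => match n with
  | 0 => (inv (⊤ : Subobject (X _⦋0⦌)).arrow : X _⦋0⦌ ⟶ (⊤ : Subobject (X _⦋0⦌))) ≫ cokernel.π (MooreD X 0)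
  | n + 1 => cokernel.π (kernel.lift (MooreD X n) (MooreD X (n + 1)) (d_squared X n))

end Moore

end MoorePart

section NablaPart

variable {C : Type u} [Category.{v} C] [HasFiniteLimits C]

namespace Nabla

/-- Pairs `i < j` in `[n+2]`. -/
def PairIdx (n : ℕ) : Type := {p : Fin (n + 3) × Fin (n + 3) // p.1 < p.2}

instance (n : ℕ) : Fintype (PairIdx n) := by unfold PairIdx; infer_instance

variable (X : SimplicialObject C)

/-- The object `∇ₙX` of `n`-cycles: `∇₀X = X₀ × X₀`, and for `n ≥ 1`, the subobject of
`Xₙ^{n+2}` of tuples `(x₀, …, x_{n+1})` with `∂ᵢ ∘ xⱼ = ∂_{j-1} ∘ xᵢ` for `i < j` in `[n+1]`. -/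
def obj : ℕ → C := fun n => match n with
  | 0 => Limits.prod (X _⦋0⦌) (X _⦋0⦌)
  | n + 1 =>
    equalizer
      (Pi.lift fun p : PairIdx n =>
        Pi.π (fun _ : Fin (n + 3) => X _⦋n + 1⦌) p.1.2 ≫
          X.δ (⟨p.1.1, by
            have h1 : (p.1.1 : ℕ) < (p.1.2 : ℕ) := p.2
            have h2 : (p.1.2 : ℕ) < n + 3 := p.1.2.isLt
            omega⟩ : Fin (n + 2)))
      (Pi.lift fun p : PairIdx n =>
        Pi.π (fun _ : Fin (n + 3) => X _⦋n + 1⦌) p.1.1 ≫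
          X.δ (⟨(p.1.2 : ℕ) - 1, by
            have h2 : (p.1.2 : ℕ) < n + 3 := p.1.2.isLt
            omega⟩ : Fin (n + 2)))

/-- The projection `prᵢ : ∇ₙX ⟶ Xₙ`. -/
def pr : ∀ (n : ℕ) (_ : Fin (n + 2)), obj X n ⟶ X _⦋n⦌ := fun n i => match n, i with
  | 0, i => if i = 0 then Limits.prod.fst else Limits.prod.snd
  | n + 1, i => equalizer.ι _ _ ≫ Pi.π (fun _ : Fin (n + 3) => X _⦋n + 1⦌) i

/-- The object `∇ₙ(X⁻)`, where `X⁻` is the shifted simplicial object with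
`(X⁻)ₙ = X_{n+1}` and `∂ᵢ⁻ = ∂_{i+1}`. -/
def shiftObj : ℕ → C := fun n => match n with
  | 0 => Limits.prod (X _⦋1⦌) (X _⦋1⦌)
  | n + 1 =>
    equalizer
      (Pi.lift fun p : PairIdx n =>
        Pi.π (fun _ : Fin (n + 3) => X _⦋n + 2⦌) p.1.2 ≫
          X.δ (⟨(p.1.1 : ℕ) + 1, by
            have h1 : (p.1.1 : ℕ) < (p.1.2 : ℕ) := p.2
            have h2 : (p.1.2 : ℕ) < n + 3 := p.1.2.isLt
            omega⟩ : Fin (n + 3)))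
      (Pi.lift fun p : PairIdx n =>
        Pi.π (fun _ : Fin (n + 3) => X _⦋n + 2⦌) p.1.1 ≫
          X.δ (⟨(p.1.2 : ℕ), by
            have h2 : (p.1.2 : ℕ) < n + 3 := p.1.2.isLt
            omega⟩ : Fin (n + 3)))

/-- The projection `prᵢ : ∇ₙ(X⁻) ⟶ X_{n+1}`. -/
def shiftPr : ∀ (n : ℕ) (_ : Fin (n + 2)), shiftObj X n ⟶ X _⦋n + 1⦌ := fun n i => match n, i with
  | 0, i => if i = 0 then Limits.prod.fst else Limits.prod.snd
  | n + 1, i => equalizer.ι _ _ ≫ Pi.π (fun _ : Fin (n + 3) => X _⦋n + 2⦌) i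

end Nabla

end NablaPart

section HornPart

variable {C : Type u} [Category.{v} C]


/-- An `(n+1, k)`-horn of a simplicial object `A` with vertex of definition `X`:
a family `xᵢ : X ⟶ Aₙ` (`i ≠ k`) with `∂ᵢ ∘ xⱼ = ∂_{j-1} ∘ xᵢ` for `i < j`, `i, j ≠ k`. -/
structure HornData (A : SimplicialObject C) (n : ℕ) (k : Fin (n + 2)) (X : C) where
  x : ∀ i : Fin (n + 2), i ≠ k → (X ⟶ A _⦋n⦌)
  compat : ∀ (m : ℕ) (hm : n = m + 1) (i j : Fin (n + 2)) (hi : i ≠ k) (hj : j ≠ k)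
      (hij : (i : ℕ) < (j : ℕ)),
      x j hj ≫ eqToHom (by rw [hm]) ≫ A.δ (⟨(i : ℕ), by
          have := j.isLt; omega⟩ : Fin (m + 2)) =
      x i hi ≫ eqToHom (by rw [hm]) ≫ A.δ (⟨(j : ℕ) - 1, by
          have := j.isLt; omega⟩ : Fin (m + 2))

/-- `A` is Kan (internally, up to regular epimorphism). -/
def IsKanObject (A : SimplicialObject C) : Prop :=
  ∀ (n : ℕ) (k : Fin (n + 2)) (X : C) (h : HornData A n k X),
    ∃ (Y : C) (p : Y ⟶ X), IsRegEpi p ∧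
      ∃ a : Y ⟶ A _⦋n + 1⦌, ∀ (i : Fin (n + 2)) (hi : i ≠ k), a ≫ A.δ i = p ≫ h.x i hi

/-- `f : A ⟶ B` is a Kan fibration (internally, up to regular epimorphism). -/
def IsKanFibration {A B : SimplicialObject C} (f : A ⟶ B) : Prop :=
  ∀ (n : ℕ) (k : Fin (n + 2)) (X : C) (h : HornData A n k X) (b : X ⟶ B _⦋n + 1⦌),
    (∀ (i : Fin (n + 2)) (hi : i ≠ k), b ≫ B.δ i = h.x i hi ≫ f.app (op ⦋n⦌)) →
    ∃ (Y : C) (p : Y ⟶ X), IsRegEpi p ∧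
      ∃ a : Y ⟶ A _⦋n + 1⦌, a ≫ f.app (op ⦋n + 1⦌) = p ≫ b ∧
        ∀ (i : Fin (n + 2)) (hi : i ≠ k), a ≫ A.δ i = p ≫ h.x i hi

/-- A simplicial set (simplicial object of `Type`) is a Kan complex. -/
def IsKanSSet (K : SimplicialObject (Type w)) : Prop :=
  ∀ (n : ℕ) (k : Fin (n + 2)) (x : ∀ i : Fin (n + 2), i ≠ k → K _⦋n⦌),
    (∀ (m : ℕ) (hm : n = m + 1) (i j : Fin (n + 2)) (hi : i ≠ k) (hj : j ≠ k)
      (hij : (i : ℕ) < (j : ℕ)),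
      K.δ (⟨(i : ℕ), by have := j.isLt; omega⟩ : Fin (m + 2)) (_root_.cast (show K _⦋n⦌ = K _⦋m+1⦌ by rw [hm]) (x j hj)) =
      K.δ (⟨(j : ℕ) - 1, by have := j.isLt; omega⟩ : Fin (m + 2))
        (_root_.cast (show K _⦋n⦌ = K _⦋m+1⦌ by rw [hm]) (x i hi))) →
    ∃ y : K _⦋n + 1⦌, ∀ (i : Fin (n + 2)) (hi : i ≠ k), K.δ i y = x i hi

/-- A map of simplicial sets is a Kan fibration. -/
def IsKanFibrationSSet {K L : SimplicialObject (Type w)} (g : K ⟶ L) : Prop :=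
  ∀ (n : ℕ) (k : Fin (n + 2)) (x : ∀ i : Fin (n + 2), i ≠ k → K _⦋n⦌),
    (∀ (m : ℕ) (hm : n = m + 1) (i j : Fin (n + 2)) (hi : i ≠ k) (hj : j ≠ k)
      (hij : (i : ℕ) < (j : ℕ)),
      K.δ (⟨(i : ℕ), by have := j.isLt; omega⟩ : Fin (m + 2)) (_root_.cast (show K _⦋n⦌ = K _⦋m+1⦌ by rw [hm]) (x j hj)) =
      K.δ (⟨(j : ℕ) - 1, by have := j.isLt; omega⟩ : Fin (m + 2))
        (_root_.cast (show K _⦋n⦌ = K _⦋m+1⦌ by rw [hm]) (x i hi))) →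
    ∀ b : L _⦋n + 1⦌,
      (∀ (i : Fin (n + 2)) (hi : i ≠ k), L.δ i b = g.app (op ⦋n⦌) (x i hi)) →
      ∃ a : K _⦋n + 1⦌, g.app (op ⦋n + 1⦌) a = b ∧
        ∀ (i : Fin (n + 2)) (hi : i ≠ k), K.δ i a = x i hi

/-- The simplicial set `hom(P, A)`. -/
def homSimplicial (P : C) (A : SimplicialObject C) : SimplicialObject (Type v) :=
  A ⋙ coyoneda.obj (op P)

/-- The map of simplicial sets `hom(P, f)`. -/
def homSimplicialMap (P : C) {A B : SimplicialObject C} (f : A ⟶ B) :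
    homSimplicial P A ⟶ homSimplicial P B :=
  Functor.whiskerRight f (coyoneda.obj (op P))


end HornPart

section SSetPart


variable {K L : SimplicialObject (Type w)}

/-- The iterated degeneracy `σ₀ⁿ(x)` of a vertex `x`. -/
def bpt (K : SimplicialObject (Type w)) (x : K _⦋0⦌) : ∀ n : ℕ, K _⦋n⦌ := fun n => match n with
  | 0 => x
  | n + 1 => K.σ (0 : Fin (n + 1)) (bpt K x n)

/-- `Zₙ(K, x)`: the `n`-simplices all of whose faces are the basepoint. -/
def SZ (K : SimplicialObject (Type w)) (x : K _⦋0⦌) : ℕ → Type w := fun n => match n with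
  | 0 => K _⦋0⦌
  | n + 1 => { z : K.obj (op (SimplexCategory.mk (n + 1))) // ∀ i : Fin (n + 2), K.δ i z = bpt K x n }

/-- The underlying `n`-simplex of an element of `Zₙ(K, x)`. -/
def szVal {K : SimplicialObject (Type w)} {x : K _⦋0⦌} : ∀ {n : ℕ}, SZ K x n → K _⦋n⦌ := fun {n} z => match n, z with
  | 0, z => z
  | _ + 1, z => z.1

/-- The homotopy relation on `Zₙ(K, x)`: `z ∼ z'` iff there is `y ∈ K_{n+1}` with
`∂ᵢ(y) = x` for `i < n`, `∂ₙ(y) = z` and `∂_{n+1}(y) = z'`. -/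
def hRel (K : SimplicialObject (Type w)) (x : K _⦋0⦌) (n : ℕ) (z z' : SZ K x n) : Prop :=
  ∃ y : K _⦋n + 1⦌,
    (∀ i : Fin (n + 2), (i : ℕ) < n → K.δ i y = bpt K x n) ∧
    K.δ (⟨n, by omega⟩ : Fin (n + 2)) y = szVal z ∧
    K.δ (Fin.last (n + 1)) y = szVal z'

/-- The homotopy "group" `πₙ(K, x)` as a quotient set. -/
def piSet (K : SimplicialObject (Type w)) (x : K _⦋0⦌) (n : ℕ) : Type w :=
  Quot (hRel K x n)

theorem δ_app (g : K ⟶ L) {n : ℕ} (i : Fin (n + 2)) (z : K _⦋n + 1⦌) :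
    L.δ i (g.app (op ⦋n + 1⦌) z) = g.app (op ⦋n⦌) (K.δ i z) := by
  have := ConcreteCategory.congr_hom (g.naturality ((SimplexCategory.δ i).op)) z
  simpa [SimplicialObject.δ] using this.symm

theorem σ_app (g : K ⟶ L) {n : ℕ} (i : Fin (n + 1)) (z : K _⦋n⦌) :
    L.σ i (g.app (op ⦋n⦌) z) = g.app (op ⦋n + 1⦌) (K.σ i z) := by
  have := ConcreteCategory.congr_hom (g.naturality ((SimplexCategory.σ i).op)) z
  simpa [SimplicialObject.σ] using this.symm

theorem bpt_app (g : K ⟶ L) (x : K _⦋0⦌) :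
    ∀ n : ℕ, g.app (op ⦋n⦌) (bpt K x n) = bpt L (g.app (op ⦋0⦌) x) n := fun n => match n with
  | 0 => rfl
  | n + 1 => by rw [bpt, bpt, ← bpt_app g x n, σ_app]

/-- The map `Zₙ(K, x) → Zₙ(L, g(x))` induced by `g : K ⟶ L`. -/
def szMap (g : K ⟶ L) (x : K _⦋0⦌) : ∀ n : ℕ, SZ K x n → SZ L (g.app (op ⦋0⦌) x) n := fun n z => match n, z with
  | 0, z => g.app (op ⦋0⦌) z
  | n + 1, z => ⟨g.app (op ⦋n + 1⦌) z.1, fun i => by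
      rw [δ_app, z.2 i, bpt_app]⟩

theorem szVal_szMap (g : K ⟶ L) (x : K _⦋0⦌) :
    ∀ (n : ℕ) (z : SZ K x n), szVal (szMap g x n z) = g.app (op ⦋n⦌) (szVal z) := fun n z => match n, z with
  | 0, _ => rfl
  | _ + 1, _ => rfl

/-- The map `πₙ(K, x) → πₙ(L, g(x))` induced by `g : K ⟶ L`. -/
def piMap (g : K ⟶ L) (x : K _⦋0⦌) (n : ℕ) :
    piSet K x n → piSet L (g.app (op ⦋0⦌) x) n :=
  Quot.map (szMap g x n) (by
    rintro z z' ⟨y, h1, h2, h3⟩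
    refine ⟨g.app (op ⦋n + 1⦌) y, fun i hi => by rw [δ_app, h1 i hi, bpt_app], ?_, ?_⟩
    · rw [δ_app, h2, szVal_szMap]
    · rw [δ_app, h3, szVal_szMap])

/-- `g : K ⟶ L` is a weak equivalence of simplicial sets: it induces bijections on
all homotopy groups at all basepoints. -/
def IsWeakEquivalenceSSet (g : K ⟶ L) : Prop :=
  ∀ (n : ℕ) (x : K _⦋0⦌), Function.Bijective (piMap g x n)


end SSetPart


section HMapPart
variable {C : Type u} [Category.{v} C] [HasZeroMorphisms C] [HasFiniteLimits C] [HasCokernels C]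

/-- The data of the morphisms induced by a simplicial morphism `f : A ⟶ B` on Moore
complexes, on cycles, and on homology; each component is uniquely determined by the
stated compatibility. -/
structure HMapData {A B : SimplicialObject C} (f : A ⟶ B) where
  ν : ∀ n : ℕ, Moore.NObj A n ⟶ Moore.NObj B n
  hν : ∀ n : ℕ, ν n ≫ (Moore.NSub B n).arrow = (Moore.NSub A n).arrow ≫ f.app (op ⦋n⦌)
  κ : ∀ n : ℕ, kernel (Moore.MooreD A n) ⟶ kernel (Moore.MooreD B n)
  hκ : ∀ n : ℕ, κ n ≫ kernel.ι (Moore.MooreD B n) = kernel.ι (Moore.MooreD A n) ≫ ν (n + 1)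
  η : ∀ n : ℕ, Moore.H A n ⟶ Moore.H B n
  hη₀ : cokernel.π (Moore.MooreD A 0) ≫ η 0 = ν 0 ≫ cokernel.π (Moore.MooreD B 0)
  hη : ∀ n : ℕ,
    cokernel.π (kernel.lift (Moore.MooreD A n) (Moore.MooreD A (n + 1)) (Moore.d_squared A n)) ≫
        η (n + 1) =
      κ n ≫
        cokernel.π (kernel.lift (Moore.MooreD B n) (Moore.MooreD B (n + 1)) (Moore.d_squared B n))

/-- `f` is a homology isomorphism. -/
def IsHomologyIso {A B : SimplicialObject C} (f : A ⟶ B) : Prop :=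
  ∀ d : HMapData f, ∀ n : ℕ, IsIso (d.η n)

end HMapPart


section SplitEpi

variable {C : Type u} [Category.{v} C]

theorem isRegEpi_of_comp_eq_id {X Y : C} {p : X ⟶ Y} {s : Y ⟶ X} (hs : s ≫ p = 𝟙 Y) :
    IsRegEpi p :=
  have : IsSplitEpi p := ⟨⟨⟨s, hs⟩⟩⟩
  ⟨RegularEpi.ofSplitEpi p⟩

variable [HasZeroMorphisms C] [HasFiniteLimits C] [IsSemiAbelian C]

/-- Protomodularity, applied to the split epimorphisms `m ≫ p` and `p`: their kernels agree, so
the comparison `m` is invertible. -/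
theorem isIso_of_mono_of_lifts_section_of_lifts_kernel_ι {E' E B : C} {p : E ⟶ B} {s : B ⟶ E}
    (hs : s ≫ p = 𝟙 B) (m : E' ⟶ E) [Mono m] {s' : B ⟶ E'} (hs' : s' ≫ m = s)
    {k : kernel p ⟶ E'} (hk : k ≫ m = kernel.ι p) : IsIso m := by
  have hs'p : s' ≫ m ≫ p = 𝟙 B := by rw [← Category.assoc, hs', hs]
  let u : kernel (m ≫ p) ⟶ kernel p :=
    kernel.lift p (kernel.ι (m ≫ p) ≫ m) (by rw [Category.assoc, kernel.condition])
  have hu : u ≫ kernel.ι p = kernel.ι (m ≫ p) ≫ m := kernel.lift_ι _ _ _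
  have : Mono u := mono_of_mono_fac hu
  have : IsSplitEpi u := by
    refine ⟨⟨⟨kernel.lift (m ≫ p) k (by rw [← Category.assoc, hk, kernel.condition]), ?_⟩⟩⟩
    rw [← cancel_mono (kernel.ι p), Category.assoc, hu, kernel.lift_ι_assoc, hk,
      Category.id_comp]
  have : IsIso u := isIso_of_mono_of_isSplitEpi u
  exact IsSemiAbelian.protomodular (m ≫ p) p (isRegEpi_of_comp_eq_id hs'p)
    (isRegEpi_of_comp_eq_id hs) m (𝟙 B) (Category.comp_id _) u hu inferInstance inferInstance

theorem hom_ext_of_kernel_ι_of_section {E B T : C} {p : E ⟶ B} {s : B ⟶ E} (hs : s ≫ p = 𝟙 B)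
    {u v : E ⟶ T} (hk : kernel.ι p ≫ u = kernel.ι p ≫ v) (hsu : s ≫ u = s ≫ v) : u = v := by
  have := isIso_of_mono_of_lifts_section_of_lifts_kernel_ι hs (equalizer.ι u v)
    (equalizer.lift_ι s hsu) (equalizer.lift_ι _ hk)
  exact (cancel_epi (equalizer.ι u v)).1 (equalizer.condition u v)

end SplitEpi

section ReflexivePair

variable {C : Type u} [Category.{v} C] [HasZeroMorphisms C] [HasFiniteLimits C]
  {X Y : C} {d₀ d₁ : X ⟶ Y}

theorem kernel_ι_comp_comp_eq_zero {N Q : C} {i : N ⟶ X} {hi : i ≫ d₀ = 0}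
    (hker : IsLimit (KernelFork.ofι i hi)) {π : Y ⟶ Q} (hπ : (i ≫ d₁) ≫ π = 0) :
    kernel.ι d₀ ≫ d₁ ≫ π = 0 := by
  obtain ⟨l, hl⟩ := KernelFork.IsLimit.lift' hker (kernel.ι d₀) (kernel.condition d₀)
  rw [← hl, KernelFork.ι_ofι, Category.assoc, ← Category.assoc i, hπ, comp_zero]

variable [IsSemiAbelian C] {σ : Y ⟶ X}

theorem comp_eq_comp_of_reflexive (h₀ : σ ≫ d₀ = 𝟙 Y) (h₁ : σ ≫ d₁ = 𝟙 Y) {Q : C} {π : Y ⟶ Q}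
    (hπ : kernel.ι d₀ ≫ d₁ ≫ π = 0) : d₀ ≫ π = d₁ ≫ π :=
  hom_ext_of_kernel_ι_of_section h₀ (by rw [kernel.condition_assoc, zero_comp, hπ])
    (by rw [← Category.assoc, ← Category.assoc, h₀, h₁])

def isColimitCoforkOfIsCokernel (h₀ : σ ≫ d₀ = 𝟙 Y) (h₁ : σ ≫ d₁ = 𝟙 Y) {N Q : C}
    {i : N ⟶ X} {hi : i ≫ d₀ = 0} (hker : IsLimit (KernelFork.ofι i hi)) {π : Y ⟶ Q}
    {hπ : (i ≫ d₁) ≫ π = 0} (hcok : IsColimit (CokernelCofork.ofπ π hπ)) :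
    IsColimit (Cofork.ofπ π
      (comp_eq_comp_of_reflexive h₀ h₁ (kernel_ι_comp_comp_eq_zero hker hπ))) :=
  Cofork.IsColimit.mk' _ fun s =>
    let l := CokernelCofork.IsColimit.desc' hcok s.π
      (by rw [Category.assoc, ← s.condition, ← Category.assoc, hi, zero_comp])
    ⟨l.1, l.2, fun hm => Cofork.IsColimit.hom_ext hcok (hm.trans l.2.symm)⟩

end ReflexivePair

section CokernelCompIso

variable {C : Type u} [Category.{v} C] [HasZeroMorphisms C] {W X Y : C} {f : W ⟶ X} {e : X ⟶ Y}
  {f' : W ⟶ Y} [HasCokernel f']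

theorem comp_comp_cokernel_π_eq_zero (hf : f ≫ e = f') : f ≫ e ≫ cokernel.π f' = 0 := by
  rw [← Category.assoc, hf, cokernel.condition]

def isColimitCokernelCoforkOfCompIso [IsIso e] (hf : f ≫ e = f') :
    IsColimit (CokernelCofork.ofπ (e ≫ cokernel.π f') (comp_comp_cokernel_π_eq_zero hf)) :=
  CokernelCofork.IsColimit.ofπ' _ _ fun k hk =>
    ⟨cokernel.desc f' (inv e ≫ k) (by rw [← hf, Category.assoc, IsIso.hom_inv_id_assoc, hk]),
      by rw [Category.assoc, cokernel.π_desc, IsIso.hom_inv_id_assoc]⟩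

end CokernelCompIso

namespace Moore

variable {C : Type u} [Category.{v} C] [HasZeroMorphisms C] [HasFiniteLimits C]
  (X : SimplicialObject C)

theorem arrow_comp_δ_zero : (NSub X 1).arrow ≫ X.δ 0 = 0 :=
  arrow_comp_δ_castSucc X 0 0

def isLimitNSubOne : IsLimit (KernelFork.ofι (NSub X 1).arrow (arrow_comp_δ_zero X)) :=
  KernelFork.IsLimit.ofι' _ _ fun k hk =>
    ⟨factorThru _ k ((finset_inf_factors _).mpr fun i _ => by
      obtain rfl := Fin.fin_one_eq_zero i
      exact kernelSubobject_factors _ k hk), factorThru_arrow _ _ _⟩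

def isColimitQZero [HasCokernels C] :
    IsColimit (CokernelCofork.ofπ (f := (NSub X 1).arrow ≫ X.δ 1) (q X 0)
      (comp_comp_cokernel_π_eq_zero (f' := MooreD X 0) (Category.assoc _ _ _))) :=
  isColimitCokernelCoforkOfCompIso (Category.assoc _ _ _)

end Moore

/-- For any simplicial object `A` in a semi-abelian category, `H₀A` is the
coequalizer of `∂₀, ∂₁ : A₁ ⇉ A₀` (via the canonical quotient map `q₀ : A₀ ⟶ H₀A`). -/
theorem H0_is_coequalizer
    {C : Type u} [Category.{v} C] [HasZeroMorphisms C] [HasFiniteLimits C] [IsSemiAbelian C]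
    [HasCokernels C] (A : SimplicialObject C) :
    ∃ w : A.δ (0 : Fin 2) ≫ Moore.q A 0 = A.δ (1 : Fin 2) ≫ Moore.q A 0,
      Nonempty (IsColimit (Cofork.ofπ (Moore.q A 0) w)) := by
  have h₀ : A.σ (0 : Fin 1) ≫ A.δ (0 : Fin 2) = 𝟙 _ := A.δ_comp_σ_self
  have h₁ : A.σ (0 : Fin 1) ≫ A.δ (1 : Fin 2) = 𝟙 _ := A.δ_comp_σ_succ
  exact ⟨_, ⟨isColimitCoforkOfIsCokernel h₀ h₁ (Moore.isLimitNSubOne A) (Moore.isColimitQZero A)⟩⟩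

end SemiAbPaper
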